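/- Let G be a graph, 𝒟 a cross-free family of edge-cuts of G, and [A*,B*] an edge-cut of G. For each [A,B] ∈ 𝒟 let f([A,B]) = [A ∩ B*, B ∪ A*], and let 𝒟' = {[A*,B*]} ∪ {f([A,B]) : [A,B] ∈ 𝒟}. Then there exists 𝒟'' ⊆ 𝒟' − {[A*,B*]} with |𝒟''| ≤ 2·(order of [A*,B*]) such that every f([A,B]) in 𝒟' outside 𝒟'' ∪ {[A*,B*]} has order at most the order of [A,B], and every f([A,B]) ∈ 𝒟'' has order at most the order of [A,B] plus the order of [A*,B*]. -/

import Mathlib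

/-- A finite multigraph (loops and parallel edges allowed): each edge in `E`
has an unordered pair of endpoints in `V`. -/
structure Multigraph (V E : Type) where
  ends : E → Sym2 V

namespace Multigraph

variable {V E : Type}

/-- The edge `e` has an end in the vertex set `A`. -/
def incident (G : Multigraph V E) (A : Set V) (e : E) : Prop :=
  ∃ x ∈ G.ends e, x ∈ A

/-- The edge `e` has one end in `A` and one end in `B`. -/
def crosses (G : Multigraph V E) (A B : Set V) (e : E) : Prop :=
  G.incident A e ∧ G.incident B e

/-- The order of the edge-cut `[A,B]`: the number of edges with one end in `A`
and one end in `B`. -/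
noncomputable def cutOrder (G : Multigraph V E) (A B : Set V) : ℕ :=
  {e | G.crosses A B e}.ncard

/-- `[A,B]` is an edge-cut of `G`: an ordered pair of disjoint vertex sets
covering all vertices. -/
def IsCut (G : Multigraph V E) (A B : Set V) : Prop :=
  Disjoint A B ∧ A ∪ B = Set.univ

end Multigraph

/-- A family of edge-cuts is cross-free if the first components of any two
distinct members are disjoint. -/
def CrossFree {V : Type} (𝓓 : Set (Set V × Set V)) : Prop :=
  ∀ p ∈ 𝓓, ∀ q ∈ 𝓓, p ≠ q → Disjoint p.1 q.1

/-! An edge crossing `[A ∩ B*, B ∪ A*]` but not `[A,B]` must join `A ∩ B*` to `A*`, so it is an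
edge of `[A*,B*]` with an end in `A`. Take for `𝓓''` the images of the members of `𝓓` that gain
such an edge: the other images cross only edges that `[A,B]` already crosses, and every image
crosses only edges of `[A,B]` or of `[A*,B*]`. Since the first sides of a cross-free family are
disjoint, each of the at most `2·|[A*,B*]|` ends of edges of `[A*,B*]` lies in the first side of
at most one member, which bounds `|𝓓''|`. -/

namespace Multigraph

variable {V E : Type} (G : Multigraph V E)

lemma crosses_comm {A B : Set V} {e : E} : G.crosses A B e ↔ G.crosses B A e :=
  and_comm

lemma incident_mono {A A' : Set V} (h : A ⊆ A') {e : E} (he : G.incident A e) :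
    G.incident A' e :=
  let ⟨x, hx, hxA⟩ := he; ⟨x, hx, h hxA⟩

lemma crosses_inter_union {A B A' B' : Set V} {e : E}
    (he : G.crosses (A ∩ B') (B ∪ A') e) :
    G.crosses A B e ∨ G.crosses (A ∩ B') A' e := by
  obtain ⟨hA, y, hy, hyB | hyA'⟩ := he
  · exact .inl ⟨G.incident_mono Set.inter_subset_left hA, y, hy, hyB⟩
  · exact .inr ⟨hA, y, hy, hyA'⟩

lemma cutOrder_inter_union_le [Finite E] (A B A' B' : Set V) :
    G.cutOrder (A ∩ B') (B ∪ A') ≤ G.cutOrder A B + G.cutOrder A' B' := by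
  have hsub : {e | G.crosses (A ∩ B') (B ∪ A') e} ⊆
      {e | G.crosses A B e} ∪ {e | G.crosses A' B' e} := by
    intro e he
    refine (G.crosses_inter_union he).imp id fun h => ?_
    exact (G.crosses_comm.mp h).imp id (G.incident_mono Set.inter_subset_right)
  exact (Set.ncard_le_ncard hsub).trans (Set.ncard_union_le _ _)

lemma ncard_mem_ends_le_two (e : E) : {x | x ∈ G.ends e}.ncard ≤ 2 := by
  induction G.ends e using Sym2.ind with
  | _ a b =>
    have : {x | x ∈ s(a, b)} = {a, b} := by ext; simp
    exact this ▸ (Set.ncard_insert_le a {b}).trans (by simp)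

lemma ncard_ends_le (F : Set E) (hF : F.Finite) :
    {x | ∃ e ∈ F, x ∈ G.ends e}.ncard ≤ 2 * F.ncard := by
  have : {x | ∃ e ∈ F, x ∈ G.ends e} = ⋃ e ∈ hF.toFinset, {x | x ∈ G.ends e} := by ext; simp
  calc _ ≤ ∑ e ∈ hF.toFinset, {x | x ∈ G.ends e}.ncard :=
        this ▸ hF.toFinset.set_ncard_biUnion_le _
    _ ≤ hF.toFinset.card • 2 :=
        Finset.sum_le_card_nsmul _ _ _ fun e _ => G.ncard_mem_ends_le_two e
    _ = 2 * F.ncard := by rw [Set.ncard_eq_toFinset_card F hF, smul_eq_mul, mul_comm]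

lemma exists_crosses_of_not_subset {A B A' B' : Set V}
    (h : ¬{e | G.crosses (A ∩ B') (B ∪ A') e} ⊆ {e | G.crosses A B e}) :
    ∃ e, G.crosses A' B' e ∧ ∃ x ∈ G.ends e, x ∈ A ∩ B' := by
  obtain ⟨e, he, hne⟩ := Set.not_subset.mp h
  obtain ⟨⟨x, hx, hxAB'⟩, hA'⟩ := (G.crosses_inter_union he).resolve_left hne
  exact ⟨e, ⟨hA', x, hx, hxAB'.2⟩, x, hx, hxAB'⟩

end Multigraph

lemma CrossFree.ncard_inter_nonempty_le {V : Type} {𝓓 : Set (Set V × Set V)} (h𝓓 : CrossFree 𝓓)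
    {X : Set V} (hX : X.Finite) : {p ∈ 𝓓 | (p.1 ∩ X).Nonempty}.ncard ≤ X.ncard := by
  rcases Set.eq_empty_or_nonempty {p ∈ 𝓓 | (p.1 ∩ X).Nonempty} with hS | ⟨-, -, x₀, -⟩
  · simp [hS]
  have : Nonempty V := ⟨x₀⟩
  have hwit (p) (hp : p ∈ {p ∈ 𝓓 | (p.1 ∩ X).Nonempty}) :=
    Classical.epsilon_spec (p := (· ∈ p.1 ∩ X)) hp.2
  refine Set.ncard_le_ncard_of_injOn (fun p => Classical.epsilon (· ∈ p.1 ∩ X))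
    (fun p hp => (hwit p hp).2) (fun p hp q hq hpq => ?_) hX
  by_contra hne
  have hq' := (hwit q hq).1
  simp only at hpq
  exact Set.disjoint_left.mp (h𝓓 p hp.1 q hq.1 hne) (hwit p hp).1 (hpq ▸ hq')

theorem crossFree_insert_one_general {V E : Type} [Fintype V] [Fintype E]
    (G : Multigraph V E) (𝓓 : Set (Set V × Set V)) (hcf : CrossFree 𝓓)
    (A' B' : Set V) (hstar : G.IsCut A' B') :
    ∃ 𝓓'' ⊆ (fun p : Set V × Set V => (p.1 ∩ B', p.2 ∪ A')) '' 𝓓,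
      (A', B') ∉ 𝓓'' ∧
      𝓓''.ncard ≤ 2 * G.cutOrder A' B' ∧
      (∀ p ∈ 𝓓, (p.1 ∩ B', p.2 ∪ A') ∉ 𝓓'' → (p.1 ∩ B', p.2 ∪ A') ≠ (A', B') →
        G.cutOrder (p.1 ∩ B') (p.2 ∪ A') ≤ G.cutOrder p.1 p.2) ∧
      (∀ p ∈ 𝓓, (p.1 ∩ B', p.2 ∪ A') ∈ 𝓓'' →
        G.cutOrder (p.1 ∩ B') (p.2 ∪ A') ≤
          G.cutOrder p.1 p.2 + G.cutOrder A' B') := by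
  set S := {p ∈ 𝓓 | ¬{e | G.crosses (p.1 ∩ B') (p.2 ∪ A') e} ⊆ {e | G.crosses p.1 p.2 e}}
  set X := {x | ∃ e ∈ {e | G.crosses A' B' e}, x ∈ G.ends e}
  have hgain (p) (hp : p ∈ S) := G.exists_crosses_of_not_subset hp.2
  refine ⟨(fun p : Set V × Set V => (p.1 ∩ B', p.2 ∪ A')) '' S,
    Set.image_mono (Set.sep_subset _ _), ?_, ?_, ?_,
    fun p _ _ => G.cutOrder_inter_union_le p.1 p.2 A' B'⟩
  · rintro ⟨p, hp, hpA'⟩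
    obtain ⟨-, -, x, -, hx⟩ := hgain p hp
    have hfst : p.1 ∩ B' = A' := congrArg Prod.fst hpA'
    exact Set.disjoint_left.mp hstar.1 (hfst ▸ hx) hx.2
  · calc _ ≤ S.ncard := Set.ncard_image_le S.toFinite
      _ ≤ {p ∈ 𝓓 | (p.1 ∩ X).Nonempty}.ncard := by
        refine Set.ncard_le_ncard (fun p hp => ⟨hp.1, ?_⟩)
        obtain ⟨e, he, x, hx, hxp⟩ := hgain p hp
        exact ⟨x, hxp.1, e, he, hx⟩
      _ ≤ X.ncard := hcf.ncard_inter_nonempty_le X.toFinite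
      _ ≤ 2 * G.cutOrder A' B' := G.ncard_ends_le _ (Set.toFinite _)
  · intro p hp hnot _
    exact Set.ncard_le_ncard (not_not.mp fun h => hnot ⟨p, ⟨hp, h⟩, rfl⟩)

/-- Let `G` be a graph, `𝓓` a cross-free family of edge-cuts of
`G`, and `[A*,B*]` an edge-cut of `G`. For each `[A,B] ∈ 𝓓` let
`f([A,B]) = [A ∩ B*, B ∪ A*]`, and let `𝓓' = {[A*,B*]} ∪ f '' 𝓓`. Then there
exists `𝓓'' ⊆ 𝓓' − {[A*,B*]}` with `|𝓓''| ≤ 2·|[A*,B*]|` such that every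
`f([A,B])` outside `𝓓'' ∪ {[A*,B*]}` has order at most the order of `[A,B]`,
and every `f([A,B]) ∈ 𝓓''` has order at most the order of `[A,B]` plus the
order of `[A*,B*]`. -/
theorem crossFree_insert_one {V E : Type} [Fintype V] [Fintype E]
    (G : Multigraph V E) (𝓓 : Set (Set V × Set V)) (hcf : CrossFree 𝓓)
    (hcut : ∀ p ∈ 𝓓, G.IsCut p.1 p.2)
    (A' B' : Set V) (hstar : G.IsCut A' B') :
    ∃ 𝓓'' ⊆ (fun p : Set V × Set V => (p.1 ∩ B', p.2 ∪ A')) '' 𝓓,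
      (A', B') ∉ 𝓓'' ∧
      𝓓''.ncard ≤ 2 * G.cutOrder A' B' ∧
      (∀ p ∈ 𝓓, (p.1 ∩ B', p.2 ∪ A') ∉ 𝓓'' → (p.1 ∩ B', p.2 ∪ A') ≠ (A', B') →
        G.cutOrder (p.1 ∩ B') (p.2 ∪ A') ≤ G.cutOrder p.1 p.2) ∧
      (∀ p ∈ 𝓓, (p.1 ∩ B', p.2 ∪ A') ∈ 𝓓'' →
        G.cutOrder (p.1 ∩ B') (p.2 ∪ A') ≤
          G.cutOrder p.1 p.2 + G.cutOrder A' B') :=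
  crossFree_insert_one_general G 𝓓 hcf A' B' hstar
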